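/- Adaptive rejection sampling with a validity mask is equivalent to renormalized masked sampling for a single draw: given a probability vector p on a finite set T and a valid subset V ⊆ T with p(V) > 0, the distribution of the first valid sample under the scheme 'sample from p without replacement in an order given by one Gumbel-perturbation ranking, return the first element in V' equals the conditional distribution p(· | V). -/

import Mathlib

/-!
Conditionally on `G v = x`, independence and the Gumbel CDF `F(y) = exp (-e^{-y})` give
`P(log p t + G t < log p v + x for all t ∈ V \ {v}) = ∏ F(x + log (p v / p t))`, which equals
`exp (-(s / p v) e^{-x})` with `s = ∑_{t ∈ V \ {v}} p t`. Integrating against the Gumbel density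
`e^{-x} exp (-e^{-x})` leaves `∫ e^{-x} exp (-(1 + s / p v) e^{-x}) dx = p v / (p v + s)`, because
`exp (-c e^{-x})` is an antiderivative of `c e^{-x} exp (-c e^{-x})` rising from `0` to `1`.
-/

open MeasureTheory ProbabilityTheory Real Set Filter Topology

lemma integrable_deriv_of_nonneg_of_tendsto {f f' : ℝ → ℝ} {m n : ℝ}
    (hderiv : ∀ x, HasDerivAt f (f' x) x) (hf' : ∀ x, 0 ≤ f' x)
    (hbot : Tendsto f atBot (𝓝 m)) (htop : Tendsto f atTop (𝓝 n)) : Integrable f' := by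
  have hmono : Monotone f := monotone_of_hasDerivAt_nonneg hderiv hf'
  refine integrable_of_intervalIntegral_norm_bounded (n - m)
    (fun i => intervalIntegral.integrableOn_deriv_of_nonneg
      (HasDerivAt.continuousOn fun x _ => hderiv x) (fun x _ => hderiv x) (fun x _ => hf' x))
    tendsto_neg_atTop_atBot tendsto_id ?_
  filter_upwards [eventually_ge_atTop 0] with i hi
  have hint : IntervalIntegrable f' volume (-i) i :=
    intervalIntegral.intervalIntegrable_deriv_of_nonneg
      (HasDerivAt.continuousOn fun x _ => hderiv x) (fun x _ => hderiv x) (fun x _ => hf' x)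
  simp only [norm_of_nonneg (hf' _), id]
  rw [intervalIntegral.integral_eq_sub_of_hasDerivAt (fun x _ => hderiv x) hint]
  linarith [hmono.ge_of_tendsto htop i, hmono.le_of_tendsto hbot (-i)]

/-- The CDF of the Gumbel law with location `log c`. -/
noncomputable def gumbelCDF (c x : ℝ) : ℝ := exp (-c * exp (-x))

noncomputable def gumbelPDF (c x : ℝ) : ℝ := c * exp (-x) * gumbelCDF c x

lemma gumbelCDF_nonneg (c x : ℝ) : 0 ≤ gumbelCDF c x := (exp_pos _).le

lemma gumbelCDF_zero (x : ℝ) : gumbelCDF 0 x = 1 := by simp [gumbelCDF]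

lemma gumbelCDF_add_const (c μ x : ℝ) : gumbelCDF c (x + μ) = gumbelCDF (c * exp (-μ)) x := by
  simp only [gumbelCDF, neg_add, exp_add]
  ring_nf

lemma prod_gumbelCDF {ι : Type*} (s : Finset ι) (c : ι → ℝ) (x : ℝ) :
    ∏ i ∈ s, gumbelCDF (c i) x = gumbelCDF (∑ i ∈ s, c i) x := by
  simp only [gumbelCDF, ← exp_sum, Finset.sum_mul, neg_mul, Finset.sum_neg_distrib]

lemma gumbelCDF_mul_gumbelCDF (c d x : ℝ) :
    gumbelCDF c x * gumbelCDF d x = gumbelCDF (c + d) x := by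
  simp only [gumbelCDF, ← exp_add]
  ring_nf

lemma continuous_gumbelCDF (c : ℝ) : Continuous (gumbelCDF c) := by
  unfold gumbelCDF; fun_prop

lemma continuous_gumbelPDF (c : ℝ) : Continuous (gumbelPDF c) := by
  unfold gumbelPDF gumbelCDF; fun_prop

lemma hasDerivAt_gumbelCDF (c x : ℝ) : HasDerivAt (gumbelCDF c) (gumbelPDF c x) x := by
  have := (((hasDerivAt_neg x).exp).const_mul (-c)).exp
  convert this using 1
  · rfl
  · simp only [gumbelPDF, gumbelCDF]
    ring

lemma gumbelPDF_nonneg {c : ℝ} (hc : 0 ≤ c) (x : ℝ) : 0 ≤ gumbelPDF c x := by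
  unfold gumbelPDF gumbelCDF; positivity

lemma tendsto_gumbelCDF_atTop (c : ℝ) : Tendsto (gumbelCDF c) atTop (𝓝 1) := by
  have : Tendsto (fun x => -c * exp (-x)) atTop (𝓝 0) := by
    simpa using (tendsto_exp_neg_atTop_nhds_zero).const_mul (-c)
  unfold gumbelCDF
  simpa [Function.comp_def] using (continuous_exp.tendsto 0).comp this

lemma tendsto_gumbelCDF_atBot {c : ℝ} (hc : 0 < c) : Tendsto (gumbelCDF c) atBot (𝓝 0) := by
  have : Tendsto (fun x => -c * exp (-x)) atBot atBot :=
    (tendsto_exp_atTop.comp tendsto_neg_atBot_atTop).const_mul_atTop_of_neg (neg_neg_of_pos hc)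
  exact tendsto_exp_atBot.comp this

lemma integrable_gumbelPDF {c : ℝ} (hc : 0 < c) : Integrable (gumbelPDF c) :=
  integrable_deriv_of_nonneg_of_tendsto (hasDerivAt_gumbelCDF c) (gumbelPDF_nonneg hc.le)
    (tendsto_gumbelCDF_atBot hc) (tendsto_gumbelCDF_atTop c)

lemma integral_gumbelPDF {c : ℝ} (hc : 0 < c) : ∫ x, gumbelPDF c x = 1 := by
  simpa using integral_of_hasDerivAt_of_tendsto (hasDerivAt_gumbelCDF c) (integrable_gumbelPDF hc)
    (tendsto_gumbelCDF_atBot hc) (tendsto_gumbelCDF_atTop c)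

noncomputable def gumbelMeasure : Measure ℝ :=
  volume.withDensity fun x => ENNReal.ofReal (gumbelPDF 1 x)

instance : NullSingletonClass gumbelMeasure := by
  unfold gumbelMeasure; infer_instance

lemma gumbelMeasure_Iic (a : ℝ) : gumbelMeasure (Iic a) = ENNReal.ofReal (gumbelCDF 1 a) := by
  rw [gumbelMeasure, withDensity_apply _ measurableSet_Iic,
    ← ofReal_integral_eq_lintegral_ofReal (integrable_gumbelPDF one_pos).integrableOn
      (.of_forall (gumbelPDF_nonneg zero_le_one)),
    integral_Iic_of_hasDerivAt_of_tendsto' (fun x _ => hasDerivAt_gumbelCDF 1 x)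
      (integrable_gumbelPDF one_pos).integrableOn (tendsto_gumbelCDF_atBot one_pos), sub_zero]

-- By max-stability the integrand against Lebesgue measure is `gumbelPDF (1 + a) / (1 + a)`.
lemma lintegral_gumbelCDF_gumbelMeasure {a : ℝ} (ha : 0 ≤ a) :
    ∫⁻ x, ENNReal.ofReal (gumbelCDF a x) ∂gumbelMeasure = ENNReal.ofReal (1 + a)⁻¹ := by
  have hpos : 0 < 1 + a := by linarith
  have hmul (x : ℝ) : gumbelPDF 1 x * gumbelCDF a x = (1 + a)⁻¹ * gumbelPDF (1 + a) x := by
    rw [gumbelPDF, gumbelPDF, mul_assoc, gumbelCDF_mul_gumbelCDF]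
    field_simp
  rw [gumbelMeasure, lintegral_withDensity_eq_lintegral_mul _
    (continuous_gumbelPDF 1).measurable.ennreal_ofReal
    (continuous_gumbelCDF a).measurable.ennreal_ofReal]
  simp only [Pi.mul_apply, ← ENNReal.ofReal_mul (gumbelPDF_nonneg zero_le_one _), hmul]
  rw [← ofReal_integral_eq_lintegral_ofReal ((integrable_gumbelPDF hpos).const_mul _)
    (.of_forall fun x => mul_nonneg (inv_nonneg.2 hpos.le) (gumbelPDF_nonneg hpos.le x)),
    integral_const_mul, integral_gumbelPDF hpos, mul_one]

instance : IsProbabilityMeasure gumbelMeasure :=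
  ⟨by simpa [gumbelCDF_zero] using lintegral_gumbelCDF_gumbelMeasure le_rfl⟩

lemma hasLaw_gumbelMeasure_of_cdf {Ω : Type*} [MeasurableSpace Ω] {P : Measure Ω}
    [IsFiniteMeasure P] {X : Ω → ℝ} (hX : Measurable X)
    (hcdf : ∀ x, P {ω | X ω ≤ x} = ENNReal.ofReal (exp (-exp (-x)))) :
    HasLaw X gumbelMeasure P where
  aemeasurable := hX.aemeasurable
  map_eq := by
    have : IsFiniteMeasure (P.map X) := Measure.isFiniteMeasure_map P X
    refine Measure.ext_of_Iic _ _ fun a => ?_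
    rw [Measure.map_apply hX measurableSet_Iic, gumbelMeasure_Iic, gumbelCDF, neg_one_mul]
    exact hcdf a

lemma ProbabilityTheory.HasLaw.measure_lt_of_gumbelMeasure {Ω : Type*} [MeasurableSpace Ω]
    {P : Measure Ω} {X : Ω → ℝ} (hX : HasLaw X gumbelMeasure P) (a : ℝ) :
    P {ω | X ω < a} = ENNReal.ofReal (gumbelCDF 1 a) := by
  rw [hX.measure_eq measurableSet_Iio]
  change gumbelMeasure (Iio a) = _
  rw [measure_congr Iio_ae_eq_Iic, gumbelMeasure_Iic]

lemma ProbabilityTheory.IndepFun.measure_mem_eq_lintegral {Ω α β : Type*} [MeasurableSpace Ω]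
    [MeasurableSpace α] [MeasurableSpace β] {P : Measure Ω} [IsFiniteMeasure P]
    {X : Ω → α} {Y : Ω → β}
    (hXY : IndepFun X Y P) (hX : Measurable X) (hY : Measurable Y) {S : Set (α × β)}
    (hS : MeasurableSet S) :
    P {ω | (X ω, Y ω) ∈ S} = ∫⁻ x, P {ω | (x, Y ω) ∈ S} ∂P.map X := by
  change P ((fun ω => (X ω, Y ω)) ⁻¹' S) = _
  rw [← Measure.map_apply (hX.prodMk hY) hS,
    hXY.map_prod_eq_prod_map_map hX.aemeasurable hY.aemeasurable, Measure.prod_apply hS]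
  exact lintegral_congr fun x => Measure.map_apply hY (measurable_prodMk_left hS)

section GumbelMax

variable {ι Ω : Type*} [MeasurableSpace Ω] {P : Measure Ω} {G : ι → Ω → ℝ}

-- Max-stability: `max_{t ∈ W} (ℓ t + G t)` is Gumbel with location `log ∑_{t ∈ W} exp (ℓ t)`.
lemma measure_forall_add_lt (hindep : iIndepFun G P)
    (hlaw : ∀ i, HasLaw (G i) gumbelMeasure P) (ℓ : ι → ℝ) (W : Finset ι) (y : ℝ) :
    P {ω | ∀ t ∈ W, ℓ t + G t ω < y} =
      ENNReal.ofReal (gumbelCDF (∑ t ∈ W, exp (ℓ t)) y) := by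
  have hset : {ω | ∀ t ∈ W, ℓ t + G t ω < y} = ⋂ t ∈ W, G t ⁻¹' Iio (y - ℓ t) := by
    ext ω
    simp only [mem_ofPred_eq, mem_iInter, mem_preimage, mem_Iio, lt_sub_iff_add_lt']
  rw [hset, hindep.measure_inter_preimage_eq_mul W fun _ _ => measurableSet_Iio,
    ← prod_gumbelCDF, ENNReal.ofReal_prod_of_nonneg fun _ _ => gumbelCDF_nonneg _ _]
  refine Finset.prod_congr rfl fun t _ => ?_
  refine ((hlaw t).measure_lt_of_gumbelMeasure _).trans ?_
  rw [sub_eq_add_neg, gumbelCDF_add_const, neg_neg, one_mul]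

lemma measure_forall_add_lt_add (hmeas : ∀ i, Measurable (G i)) (hindep : iIndepFun G P)
    (hlaw : ∀ i, HasLaw (G i) gumbelMeasure P) (ℓ : ι → ℝ) {W : Finset ι} {v : ι}
    (hv : v ∉ W) :
    P {ω | ∀ t ∈ W, ℓ t + G t ω < ℓ v + G v ω} =
      ENNReal.ofReal (exp (ℓ v) / (exp (ℓ v) + ∑ t ∈ W, exp (ℓ t))) := by
  have := hindep.isProbabilityMeasure
  set Y : Ω → W → ℝ := fun ω t => G t ω
  have hY : Measurable Y := measurable_pi_lambda _ fun t => hmeas t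
  have hindepY : IndepFun (G v) Y P :=
    (hindep.indepFun_finset {v} W (Finset.disjoint_singleton_left.2 hv) hmeas).comp
      (measurable_pi_apply (⟨v, Finset.mem_singleton_self v⟩ : ({v} : Finset ι))) measurable_id
  set S : Set (ℝ × (W → ℝ)) := {q | ∀ t : W, ℓ t + q.2 t < ℓ v + q.1}
  have hS : MeasurableSet S := by
    simp only [S, ofPred_forall]
    exact .iInter fun t => measurableSet_lt (by fun_prop) (by fun_prop)
  have hslice (x : ℝ) :
      {ω | (x, Y ω) ∈ S} = {ω | ∀ t ∈ W, ℓ t + G t ω < ℓ v + x} := by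
    simp [S, Y]
  have hsum : 0 ≤ (∑ t ∈ W, exp (ℓ t)) * exp (-ℓ v) := by positivity
  calc P {ω | ∀ t ∈ W, ℓ t + G t ω < ℓ v + G v ω}
      = P {ω | (G v ω, Y ω) ∈ S} := by simp [S, Y]
    _ = ∫⁻ x, ENNReal.ofReal (gumbelCDF ((∑ t ∈ W, exp (ℓ t)) * exp (-ℓ v)) x)
          ∂gumbelMeasure := by
        rw [hindepY.measure_mem_eq_lintegral (hmeas v) hY hS, (hlaw v).map_eq]
        simp only [hslice, measure_forall_add_lt hindep hlaw, add_comm (ℓ v), gumbelCDF_add_const]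
    _ = ENNReal.ofReal (exp (ℓ v) / (exp (ℓ v) + ∑ t ∈ W, exp (ℓ t))) := by
        rw [lintegral_gumbelCDF_gumbelMeasure hsum, exp_neg]
        congr 1
        field_simp

end GumbelMax

theorem stmt_14_general {T : Type*}
    {Ω : Type*} [MeasurableSpace Ω] (P : Measure Ω) [IsProbabilityMeasure P]
    (p : T → ℝ) (hp : ∀ t, 0 < p t)
    (V : Finset T)
    (G : T → Ω → ℝ) (hmeas : ∀ t, Measurable (G t))
    (hindep : ProbabilityTheory.iIndepFun G P)
    (hcdf : ∀ (t : T) (x : ℝ),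
      P {ω | G t ω ≤ x} = ENNReal.ofReal (Real.exp (-Real.exp (-x))))
    (v : T) (hv : v ∈ V) :
    P {ω | ∀ t ∈ V, t ≠ v → Real.log (p t) + G t ω < Real.log (p v) + G v ω} =
      ENNReal.ofReal (p v / ∑ t ∈ V, p t) := by
  classical
  have hevent : {ω | ∀ t ∈ V, t ≠ v → log (p t) + G t ω < log (p v) + G v ω} =
      {ω | ∀ t ∈ V.erase v, log (p t) + G t ω < log (p v) + G v ω} := by
    ext ω
    simp only [mem_ofPred_eq, Finset.mem_erase, and_imp]
    exact forall_congr' fun t => by tauto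
  rw [hevent, measure_forall_add_lt_add hmeas hindep
      (fun t => hasLaw_gumbelMeasure_of_cdf (hmeas t) (hcdf t)) _ (V.notMem_erase v),
    ← Finset.add_sum_erase V _ hv]
  simp only [exp_log (hp _)]

/-- Adaptive rejection sampling via one Gumbel-perturbation ranking is equivalent
to renormalized masked sampling: if `p` is a positive probability mass function
on a finite set `T`, `V` a nonempty subset, `ℓ t = log (p t)` and `G t` are
i.i.d. standard Gumbel, then for each `v ∈ V` the probability that `v` is the
first element of the descending ranking by `ℓ t + G t` that lies in `V` (i.e.
`v` beats every other element of `V`) is `p v / p V`. -/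
theorem stmt_14 {T : Type*} [Fintype T] [DecidableEq T]
    {Ω : Type*} [MeasurableSpace Ω] (P : Measure Ω) [IsProbabilityMeasure P]
    (p : T → ℝ) (hp : ∀ t, 0 < p t) (hsum : ∑ t : T, p t = 1)
    (V : Finset T) (hV : V.Nonempty)
    (G : T → Ω → ℝ) (hmeas : ∀ t, Measurable (G t))
    (hindep : ProbabilityTheory.iIndepFun G P)
    (hcdf : ∀ (t : T) (x : ℝ),
      P {ω | G t ω ≤ x} = ENNReal.ofReal (Real.exp (-Real.exp (-x))))
    (v : T) (hv : v ∈ V) :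
    P {ω | ∀ t ∈ V, t ≠ v → Real.log (p t) + G t ω < Real.log (p v) + G v ω} =
      ENNReal.ofReal (p v / ∑ t ∈ V, p t) :=
  stmt_14_general P p hp V G hmeas hindep hcdf v hv
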